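/- arXiv:1602.07682 — 2 statements merged into one kernel-verified Lean document; each statement's English description precedes it below -/
import Mathlib

section
/- Fix n₀ ≥ 2 with Ξ(n₀) > 0, and let (aₙ) be the sequence with a_{n₀} = (A−B)(1−γ)/Ξ(n₀) and aₙ = 0 for all n ≠ n₀, so that F_μ(z) = z − ((A−B)(1−γ)/Ξ(n₀))·z^{μn₀}. Then F_μ belongs to the class Ẽ (this is the extremal function showing that the coefficient bound Σ_{n=2}^∞ Ξ(n)aₙ ≤ (A−B)(1−γ) is sharp). -/
/-!
For the extremal coefficient sequence only the term `n₀` survives, so with `w = z^{μn₀}`,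
`H = z − h w` and `G − H = −(g − h) w` for reals `g ≥ h ≥ 0`. The reverse triangle inequality
reduces the subordination condition to `((1 − B)(g − h) + (A − B)(1 − γ) h) ‖w‖ < (A − B)(1 − γ) ‖z‖`.
The left coefficient is `Ξ(n₀) a_{n₀} = (A − B)(1 − γ)`, and `‖w‖ = ‖z‖^{μn₀} < ‖z‖` because
`μn₀ > 1` and `0 < ‖z‖ < 1`.
-/

open Complex

/-- `Ξ(n) = (1−B)((μn)^k ϑₙ − (μn)^m λₙ) + (A−B)(1−γ)(μn)^m λₙ`. -/
noncomputable def Xi (μ A B γ : ℝ) (k m : ℕ) (ϑ lam : ℕ → ℝ) (n : ℕ) : ℝ :=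
  (1 - B) * ((μ * n) ^ k * ϑ n - (μ * n) ^ m * lam n) +
    (A - B) * (1 - γ) * ((μ * n) ^ m * lam n)

/-- `Gneg μ j c a z = z − Σ_{n≥2} (μn)^j cₙ aₙ z^{μn}` (principal powers).
With `j = k, c = ϑ` this is `D_μ^k(F_μ∗Φ_μ)(z)`; with `j = m, c = λ` it is
`D_μ^m(F_μ∗Ψ_μ)(z)`. -/
noncomputable def Gneg (μ : ℝ) (j : ℕ) (c a : ℕ → ℝ) (z : ℂ) : ℂ :=
  z - ∑' n : ℕ, (((μ * (n + 2 : ℕ)) ^ j * c (n + 2) * a (n + 2) : ℝ) : ℂ) *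
    z ^ ((μ * (n + 2 : ℕ) : ℝ) : ℂ)

/-- `Fneg μ a z = z − Σ_{n≥2} aₙ z^{μn}` (principal powers). -/
noncomputable def Fneg (μ : ℝ) (a : ℕ → ℝ) (z : ℂ) : ℂ :=
  z - ∑' n : ℕ, (a (n + 2) : ℂ) * z ^ ((μ * (n + 2 : ℕ) : ℝ) : ℂ)

/-- Membership of `F_μ(z) = z − Σ_{n≥2} aₙ z^{μn}` in the class
`Ẽ_{k,m}(Φ_μ,Ψ_μ,A,B,μ,γ)`: the series for `F_μ`, `G = D_μ^k(F_μ∗Φ_μ)` and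
`H = D_μ^m(F_μ∗Ψ_μ)` converge absolutely at every `z ∈ 𝕌`, and for every
`z ∈ 𝕌 ∖ {0}` the subordination condition
`|G(z) − H(z)| < |(A−B)(1−γ)H(z) − B(G(z) − H(z))|` holds. -/
def memE (μ A B γ : ℝ) (k m : ℕ) (ϑ lam a : ℕ → ℝ) : Prop :=
  (∀ z : ℂ, ‖z‖ < 1 →
    ((Summable fun n : ℕ =>
      ‖(a (n + 2) : ℂ) * z ^ ((μ * (n + 2 : ℕ) : ℝ) : ℂ)‖) ∧
    (Summable fun n : ℕ =>
      ‖(((μ * (n + 2 : ℕ)) ^ k * ϑ (n + 2) * a (n + 2) : ℝ) : ℂ) *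
        z ^ ((μ * (n + 2 : ℕ) : ℝ) : ℂ)‖) ∧
    (Summable fun n : ℕ =>
      ‖(((μ * (n + 2 : ℕ)) ^ m * lam (n + 2) * a (n + 2) : ℝ) : ℂ) *
        z ^ ((μ * (n + 2 : ℕ) : ℝ) : ℂ)‖))) ∧
  (∀ z : ℂ, ‖z‖ < 1 → z ≠ 0 →
    ‖Gneg μ k ϑ a z - Gneg μ m lam a z‖ <
    ‖(((A - B) * (1 - γ) : ℝ) : ℂ) * Gneg μ m lam a z -
      ((B : ℝ) : ℂ) * (Gneg μ k ϑ a z - Gneg μ m lam a z)‖)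

theorem norm_sub_lt_norm_of_single_term {z w : ℂ} {e B g h : ℝ} (he : 0 ≤ e) (hB : B ≤ 0)
    (hh : 0 ≤ h) (hhg : h ≤ g) (hlt : ((1 - B) * (g - h) + e * h) * ‖w‖ < e * ‖z‖) :
    ‖(z - g * w) - (z - h * w)‖ < ‖(e : ℂ) * (z - h * w) - B * ((z - g * w) - (z - h * w))‖ := by
  have hcoef : 0 ≤ e * h - B * (g - h) := by nlinarith
  have hdiff : (z - g * w) - (z - h * w) = -(((g - h : ℝ) : ℂ) * w) := by push_cast; ring
  have hrhs : (e : ℂ) * (z - h * w) - B * ((z - g * w) - (z - h * w))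
      = (e : ℂ) * z - ((e * h - B * (g - h) : ℝ) : ℂ) * w := by push_cast; ring
  rw [hrhs, hdiff, norm_neg, norm_mul, norm_real, Real.norm_of_nonneg (sub_nonneg.2 hhg)]
  calc (g - h) * ‖w‖ < e * ‖z‖ - (e * h - B * (g - h)) * ‖w‖ := by linarith
    _ = ‖(e : ℂ) * z‖ - ‖((e * h - B * (g - h) : ℝ) : ℂ) * w‖ := by
        rw [norm_mul, norm_mul, norm_real, norm_real, Real.norm_of_nonneg he,
          Real.norm_of_nonneg hcoef]
    _ ≤ _ := norm_sub_norm_le _ _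

theorem norm_cpow_ofReal_lt_norm {z : ℂ} {t : ℝ} (hz0 : z ≠ 0) (hz : ‖z‖ < 1) (ht : 1 < t) :
    ‖z ^ (t : ℂ)‖ < ‖z‖ := by
  rw [norm_cpow_real]
  exact Real.rpow_lt_self_of_lt_one (norm_pos_iff.2 hz0) hz ht

theorem Gneg_ite_eq (μ : ℝ) (j : ℕ) (c : ℕ → ℝ) {n₀ : ℕ} (hn₀ : 2 ≤ n₀) (a₀ : ℝ) (z : ℂ) :
    Gneg μ j c (fun n => if n = n₀ then a₀ else 0) z
      = z - (((μ * n₀) ^ j * c n₀ * a₀ : ℝ) : ℂ) * z ^ ((μ * n₀ : ℝ) : ℂ) := by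
  unfold Gneg
  rw [tsum_eq_single (n₀ - 2)]
  · simp [Nat.sub_add_cancel hn₀]
  · intro n hn
    simp [show n + 2 ≠ n₀ by omega]

theorem stmt3_general (μ A B γ : ℝ) (k m : ℕ) (ϑ lam : ℕ → ℝ)
    (hμ : 1 ≤ μ) (hkm : m ≤ k)
    (hBA : B < A) (hB0 : B < 0)
    (hγ1 : γ < 1)
    (hlam : ∀ n, 2 ≤ n → 0 ≤ lam n) (hϑ : ∀ n, 2 ≤ n → lam n ≤ ϑ n)
    (n₀ : ℕ) (hn₀ : 2 ≤ n₀) (hXi : 0 < Xi μ A B γ k m ϑ lam n₀) :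
    memE μ A B γ k m ϑ lam
      (fun n => if n = n₀ then (A - B) * (1 - γ) / Xi μ A B γ k m ϑ lam n₀ else 0) := by
  constructor
  · intro z _
    refine ⟨?_, ?_, ?_⟩ <;>
    · apply summable_of_ne_finset_zero (s := {n₀ - 2})
      intro n hn
      have : n + 2 ≠ n₀ := by rw [Finset.mem_singleton] at hn; omega
      simp [this]
  intro z hz hz0
  set Ξ := Xi μ A B γ k m ϑ lam n₀ with hΞ
  have he : 0 < (A - B) * (1 - γ) := mul_pos (sub_pos.2 hBA) (sub_pos.2 hγ1)
  have ha₀ : 0 ≤ (A - B) * (1 - γ) / Ξ := div_nonneg he.le hXi.le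
  have hμn₀ : 1 < μ * n₀ := by
    have : (2 : ℝ) ≤ n₀ := by exact_mod_cast hn₀
    nlinarith
  have hmono : (μ * n₀) ^ m * lam n₀ ≤ (μ * n₀) ^ k * ϑ n₀ :=
    mul_le_mul (pow_le_pow_right₀ hμn₀.le hkm) (hϑ n₀ hn₀) (hlam n₀ hn₀) (by positivity)
  rw [Gneg_ite_eq μ k ϑ hn₀, Gneg_ite_eq μ m lam hn₀]
  refine norm_sub_lt_norm_of_single_term he.le hB0.le
    (mul_nonneg (mul_nonneg (by positivity) (hlam n₀ hn₀)) ha₀)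
    (mul_le_mul_of_nonneg_right hmono ha₀) ?_
  calc _ = Ξ * ((A - B) * (1 - γ) / Ξ) * ‖z ^ ((μ * n₀ : ℝ) : ℂ)‖ := by rw [hΞ, Xi]; ring
    _ = (A - B) * (1 - γ) * ‖z ^ ((μ * n₀ : ℝ) : ℂ)‖ := by rw [mul_div_cancel₀ _ hXi.ne']
    _ < (A - B) * (1 - γ) * ‖z‖ := mul_lt_mul_of_pos_left (norm_cpow_ofReal_lt_norm hz0 hz hμn₀) he

/-- sharpness of the coefficient bound: for `n₀ ≥ 2` with `Ξ(n₀) > 0`,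
the extremal function `F_μ(z) = z − ((A−B)(1−γ)/Ξ(n₀)) z^{μn₀}` (i.e. the coefficient
sequence with `a_{n₀} = (A−B)(1−γ)/Ξ(n₀)` and `aₙ = 0` otherwise) belongs to
`Ẽ_{k,m}(Φ_μ,Ψ_μ,A,B,μ,γ)`. -/
theorem stmt3 (μ A B γ : ℝ) (k m : ℕ) (ϑ lam : ℕ → ℝ)
    (hμ : 1 ≤ μ) (hkm : m ≤ k)
    (hB : -1 ≤ B) (hBA : B < A) (hA : A ≤ 1) (hB0 : B < 0)
    (hγ0 : 0 ≤ γ) (hγ1 : γ < 1)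
    (hlam : ∀ n, 2 ≤ n → 0 ≤ lam n) (hϑ : ∀ n, 2 ≤ n → lam n ≤ ϑ n)
    (n₀ : ℕ) (hn₀ : 2 ≤ n₀) (hXi : 0 < Xi μ A B γ k m ϑ lam n₀) :
    memE μ A B γ k m ϑ lam
      (fun n => if n = n₀ then (A - B) * (1 - γ) / Xi μ A B γ k m ϑ lam n₀ else 0) :=
  stmt3_general μ A B γ k m ϑ lam hμ hkm hBA hB0 hγ1 hlam hϑ n₀ hn₀ hXi
end

section
/- F_μ belongs to the class Ẽ if and only if the series Σ_{n=2}^∞ aₙ r^{μn} converges for every 0 ≤ r < 1 and there exists a sequence (ηₙ)_{n≥1} of nonnegative reals with Σ_{n=1}^∞ ηₙ = 1 such that Ξ(n)·aₙ = ηₙ·(A−B)(1−γ) for every n ≥ 2. (Equivalently, F_μ = Σ_{n≥1} ηₙ F_{μn}, where F_{μ1}(z) = z and F_{μn}(z) = z − ((A−B)(1−γ)/Ξ(n)) z^{μn} for n ≥ 2; this is the extreme-point representation of the class Ẽ.) -/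
open Complex

/-
Write `G = z - ∑ qₙ z^{eₙ}` and `H = z - ∑ pₙ z^{eₙ}` with `0 ≤ pₙ ≤ qₙ` and `eₙ = μ(n+2) > 1`,
and put `C = (A-B)(1-γ)`, `dₙ = qₙ - pₙ`, `cₙ = C pₙ - B dₙ`. Then `Ξ(n+2) a_{n+2} = cₙ + dₙ` and the subordination
condition reads `‖∑ dₙ z^{eₙ}‖ < ‖C z - ∑ cₙ z^{eₙ}‖`, all coefficients being nonnegative.

If `∑ (cₙ + dₙ) ≤ C`, the condition follows from the triangle inequality because `|z|^{eₙ} < |z|`.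
Conversely, at real `z = r` the condition forces `C r ≠ ∑ cₙ r^{eₙ}`. Since
`(∑ cₙ r^{eₙ}) / r` is continuous on `[0, 1)` and vanishes at `0`, it never reaches `C`, so the
absolute value can be dropped: `∑ (cₙ + dₙ) r^{eₙ} < C r`, and `r → 1` gives `∑ (cₙ + dₙ) ≤ C`.
Finally, `∑ Ξ(n) aₙ ≤ C` is the same as `Ξ(n) aₙ = ηₙ C` with `∑ ηₙ = 1`, where `η₁` takes up
the slack.
-/

open Set Filter Topology

theorem tsum_mul_rpow_lt_mul_of_ne {c e : ℕ → ℝ} {C r : ℝ} (hc : ∀ n, 0 ≤ c n)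
    (he : ∀ n, 1 < e n) (hC : 0 < C) (hr : 0 < r) (hsum : Summable fun n => c n * r ^ e n)
    (hne : ∀ t ∈ Ioc 0 r, ∑' n, c n * t ^ e n ≠ C * t) :
    ∑' n, c n * r ^ e n < C * r := by
  set φ : ℝ → ℝ := fun t => ∑' n, c n * t ^ (e n - 1)
  have hφsum : Summable fun n => c n * r ^ (e n - 1) :=
    (hsum.div_const r).congr fun n => by rw [Real.rpow_sub_one hr.ne', mul_div_assoc]
  have hφ : ∀ t, 0 < t → t * φ t = ∑' n, c n * t ^ e n := fun t ht => by
    rw [← tsum_mul_left]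
    exact tsum_congr fun n => by rw [Real.rpow_sub_one ht.ne']; field_simp
  have hφ0 : φ 0 = 0 := by
    simp [φ, Real.zero_rpow (sub_pos.2 (he _)).ne']
  have hφc : ContinuousOn φ (Icc 0 r) := by
    refine continuousOn_tsum (fun n => ?_) hφsum fun n t ht => ?_
    · exact (continuous_const.mul (Real.continuous_rpow_const (sub_pos.2 (he n)).le)).continuousOn
    · rw [Real.norm_of_nonneg (mul_nonneg (hc n) (Real.rpow_nonneg ht.1 _))]
      exact mul_le_mul_of_nonneg_left (Real.rpow_le_rpow ht.1 ht.2 (sub_pos.2 (he n)).le) (hc n)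
  have hφr : φ r < C := by
    by_contra! h
    obtain ⟨t, ht, htC⟩ := intermediate_value_Icc hr.le hφc ⟨by rw [hφ0]; exact hC.le, h⟩
    have ht0 : 0 < t := ht.1.lt_of_ne fun h0 => by subst h0; rw [hφ0] at htC; exact hC.ne htC
    exact hne t ⟨ht0, ht.2⟩ (by rw [← hφ t ht0, htC, mul_comm])
  rw [← hφ r hr, mul_comm C]
  exact mul_lt_mul_of_pos_left hφr hr

theorem summable_and_tsum_le_of_tsum_mul_rpow_le {b e : ℕ → ℝ} {C : ℝ} (hb : ∀ n, 0 ≤ b n)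
    (h : ∀ r ∈ Ioo 0 1, Summable (fun n => b n * r ^ e n) ∧ ∑' n, b n * r ^ e n ≤ C) :
    Summable b ∧ ∑' n, b n ≤ C := by
  have hpartial : ∀ N, ∑ i ∈ Finset.range N, b i ≤ C := fun N => by
    have hlim : Tendsto (fun r => ∑ i ∈ Finset.range N, b i * r ^ e i) (𝓝 1)
        (𝓝 (∑ i ∈ Finset.range N, b i * 1 ^ e i)) :=
      tendsto_finsetSum _ fun i _ => tendsto_const_nhds.mul
        (Real.continuousAt_rpow_const 1 (e i) (Or.inl one_ne_zero)).tendsto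
    simp only [Real.one_rpow, mul_one] at hlim
    refine le_of_tendsto (tendsto_nhdsWithin_of_tendsto_nhds (s := Iio 1) hlim) ?_
    filter_upwards [Ioo_mem_nhdsLT zero_lt_one] with r hr
    exact ((h r hr).1.sum_le_tsum _ fun i _ => mul_nonneg (hb i)
      (Real.rpow_nonneg hr.1.le _)).trans (h r hr).2
  exact ⟨summable_of_sum_range_le hb hpartial, Real.tsum_le_of_sum_range_le hb hpartial⟩

theorem tsum_mul_rpow_lt_mul {b e : ℕ → ℝ} {C r : ℝ} (hb : ∀ n, 0 ≤ b n) (he : ∀ n, 1 < e n)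
    (hbs : Summable b) (hle : ∑' n, b n ≤ C) (hC : 0 < C) (hr0 : 0 < r) (hr1 : r < 1) :
    ∑' n, b n * r ^ e n < C * r := by
  by_cases hpos : ∃ i, 0 < b i
  · obtain ⟨i, hi⟩ := hpos
    have hlt : ∀ n, r ^ e n < r := fun n => by
      simpa using Real.rpow_lt_rpow_of_exponent_gt hr0 hr1 (he n)
    calc ∑' n, b n * r ^ e n < ∑' n, b n * r :=
          Summable.tsum_lt_tsum_of_nonneg (fun n => mul_nonneg (hb n) (Real.rpow_nonneg hr0.le _))
            (fun n => mul_le_mul_of_nonneg_left (hlt n).le (hb n))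
            (mul_lt_mul_of_pos_left (hlt i) hi) (hbs.mul_right r)
      _ = (∑' n, b n) * r := tsum_mul_right
      _ ≤ C * r := mul_le_mul_of_nonneg_right hle hr0.le
  · push Not at hpos
    have hzero : ∀ n, b n = 0 := fun n => le_antisymm (hpos n) (hb n)
    simp only [hzero, zero_mul, tsum_zero]
    positivity

theorem summable_mul_rpow_of_eq_mul_add_mul {f g h e : ℕ → ℝ} {r : ℝ} (α β : ℝ)
    (hg : Summable fun n => g n * r ^ e n) (hh : Summable fun n => h n * r ^ e n)
    (hf : ∀ n, f n = α * g n + β * h n) : Summable fun n => f n * r ^ e n :=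
  ((hg.mul_left α).add (hh.mul_left β)).congr fun n => by rw [hf]; ring

theorem summable_mul_rpow_and_summable_iff {p q e : ℕ → ℝ} {r : ℝ} (B : ℝ) {C : ℝ}
    (hC : C ≠ 0) :
    (Summable (fun n => p n * r ^ e n) ∧ Summable fun n => q n * r ^ e n) ↔
      (Summable (fun n => (C * p n - B * (q n - p n)) * r ^ e n) ∧
        Summable fun n => (q n - p n) * r ^ e n) := by
  constructor
  · rintro ⟨hp, hq⟩
    exact ⟨summable_mul_rpow_of_eq_mul_add_mul (C + B) (-B) hp hq fun n => by ring,
      summable_mul_rpow_of_eq_mul_add_mul (-1) 1 hp hq fun n => by ring⟩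
  · rintro ⟨hc, hd⟩
    exact ⟨summable_mul_rpow_of_eq_mul_add_mul C⁻¹ (B / C) hc hd fun n => by field_simp; ring,
      summable_mul_rpow_of_eq_mul_add_mul C⁻¹ (1 + B / C) hc hd fun n => by field_simp; ring⟩

theorem summable_mul_rpow_of_le {f g e : ℕ → ℝ} {r : ℝ} (hf : ∀ n, 0 ≤ f n)
    (hfg : ∀ n, f n ≤ g n) (he : ∀ n, 0 ≤ e n) (hr0 : 0 ≤ r) (hr1 : r ≤ 1) (hg : Summable g) :
    Summable fun n => f n * r ^ e n :=
  hg.of_nonneg_of_le (fun n => mul_nonneg (hf n) (Real.rpow_nonneg hr0 _)) fun n =>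
    (mul_le_of_le_one_right (hf n) (Real.rpow_le_one hr0 hr1 (he n))).trans (hfg n)

noncomputable def rpowSeries (f e : ℕ → ℝ) (z : ℂ) : ℂ := ∑' n, (f n : ℂ) * z ^ (e n : ℂ)

section rpowSeries

variable {f e : ℕ → ℝ} {z : ℂ}

theorem norm_ofReal_mul_cpow_ofReal (c : ℝ) (z : ℂ) (t : ℝ) :
    ‖(c : ℂ) * z ^ (t : ℂ)‖ = |c| * ‖z‖ ^ t := by
  rw [norm_mul, Complex.norm_real, Real.norm_eq_abs, Complex.norm_cpow_real]

theorem summable_norm_mul_cpow_iff (hf : ∀ n, 0 ≤ f n) :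
    Summable (fun n => ‖(f n : ℂ) * z ^ (e n : ℂ)‖) ↔ Summable fun n => f n * ‖z‖ ^ e n := by
  simp only [norm_ofReal_mul_cpow_ofReal, abs_of_nonneg (hf _)]

theorem rpowSeries_ofReal {r : ℝ} (hr : 0 ≤ r) :
    rpowSeries f e r = ((∑' n, f n * r ^ e n : ℝ) : ℂ) := by
  rw [rpowSeries, Complex.ofReal_tsum]
  exact tsum_congr fun n => by rw [Complex.ofReal_mul, Complex.ofReal_cpow hr]

theorem norm_rpowSeries_le (hf : ∀ n, 0 ≤ f n) (hs : Summable fun n => f n * ‖z‖ ^ e n) :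
    ‖rpowSeries f e z‖ ≤ ∑' n, f n * ‖z‖ ^ e n := by
  have hs' := (summable_norm_mul_cpow_iff hf).2 hs
  refine (norm_tsum_le_tsum_norm hs').trans_eq (tsum_congr fun n => ?_)
  rw [norm_ofReal_mul_cpow_ofReal, abs_of_nonneg (hf n)]

theorem rpowSeries_eq_mul_add_mul {p q : ℕ → ℝ} (α β : ℝ)
    (hp : Summable fun n => (p n : ℂ) * z ^ (e n : ℂ))
    (hq : Summable fun n => (q n : ℂ) * z ^ (e n : ℂ)) (hf : ∀ n, f n = α * p n + β * q n) :
    rpowSeries f e z = α * rpowSeries p e z + β * rpowSeries q e z := by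
  rw [rpowSeries, rpowSeries, rpowSeries, ← tsum_mul_left, ← tsum_mul_left,
    ← (hp.mul_left _).tsum_add (hq.mul_left _)]
  exact tsum_congr fun n => by rw [hf]; push_cast; ring

end rpowSeries

theorem norm_sub_rpowSeries_lt_iff {p q e : ℕ → ℝ} {z : ℂ} (C B : ℝ)
    (hp : Summable fun n => (p n : ℂ) * z ^ (e n : ℂ))
    (hq : Summable fun n => (q n : ℂ) * z ^ (e n : ℂ)) :
    ‖(z - rpowSeries q e z) - (z - rpowSeries p e z)‖ <
        ‖(C : ℂ) * (z - rpowSeries p e z) -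
          (B : ℂ) * ((z - rpowSeries q e z) - (z - rpowSeries p e z))‖ ↔
      ‖rpowSeries (fun n => q n - p n) e z‖ <
        ‖(C : ℂ) * z - rpowSeries (fun n => C * p n - B * (q n - p n)) e z‖ := by
  have hd : rpowSeries (fun n => q n - p n) e z = -1 * rpowSeries p e z + 1 * rpowSeries q e z :=
    mod_cast rpowSeries_eq_mul_add_mul (-1) 1 hp hq fun n => by ring
  have hc : rpowSeries (fun n => C * p n - B * (q n - p n)) e z =
      (C + B : ℝ) * rpowSeries p e z + (-B : ℝ) * rpowSeries q e z :=
    rpowSeries_eq_mul_add_mul (C + B) (-B) hp hq fun n => by ring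
  rw [hd, hc, ← norm_neg]
  push_cast
  ring_nf

theorem forall_norm_rpowSeries_lt_iff {c d e : ℕ → ℝ} {C : ℝ} (hc : ∀ n, 0 ≤ c n)
    (hd : ∀ n, 0 ≤ d n) (he : ∀ n, 1 < e n) (hC : 0 < C)
    (hS : ∀ r ∈ Ioo 0 1, Summable (fun n => c n * r ^ e n) ∧ Summable fun n => d n * r ^ e n) :
    (∀ z : ℂ, ‖z‖ < 1 → z ≠ 0 → ‖rpowSeries d e z‖ < ‖(C : ℂ) * z - rpowSeries c e z‖) ↔
      Summable (fun n => c n + d n) ∧ ∑' n, (c n + d n) ≤ C := by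
  have hsplit : ∀ r ∈ Ioo (0 : ℝ) 1,
      ∑' n, (c n + d n) * r ^ e n = ∑' n, c n * r ^ e n + ∑' n, d n * r ^ e n := fun r hr => by
    simp only [add_mul]
    exact (hS r hr).1.tsum_add (hS r hr).2
  constructor
  · intro h
    have hreal : ∀ r ∈ Ioo (0 : ℝ) 1,
        ∑' n, d n * r ^ e n < |C * r - ∑' n, c n * r ^ e n| := fun r hr => by
      have := h r (by rw [Complex.norm_real, Real.norm_of_nonneg hr.1.le]; exact hr.2)
        (by exact_mod_cast hr.1.ne')
      rwa [rpowSeries_ofReal hr.1.le, rpowSeries_ofReal hr.1.le, Complex.norm_real,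
        Real.norm_of_nonneg (tsum_nonneg fun n => mul_nonneg (hd n) (Real.rpow_nonneg hr.1.le _)),
        ← Complex.ofReal_mul, ← Complex.ofReal_sub, Complex.norm_real, Real.norm_eq_abs] at this
    refine summable_and_tsum_le_of_tsum_mul_rpow_le (fun n => add_nonneg (hc n) (hd n))
      fun r hr => ⟨(hS r hr).1.add (hS r hr).2 |>.congr fun n => (add_mul _ _ _).symm, ?_⟩
    have hg : ∑' n, c n * r ^ e n < C * r :=
      tsum_mul_rpow_lt_mul_of_ne hc he hC hr.1 (hS r hr).1 fun t ht hEq => by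
        have := hreal t ⟨ht.1, ht.2.trans_lt hr.2⟩
        rw [hEq, sub_self, abs_zero] at this
        exact this.not_ge (tsum_nonneg fun n => mul_nonneg (hd n) (Real.rpow_nonneg ht.1.le _))
    have hD := hreal r hr
    rw [abs_of_pos (sub_pos.2 hg)] at hD
    rw [hsplit r hr]
    nlinarith [hr.2]
  · rintro ⟨hbs, hle⟩ z hz hz0
    have hr : ‖z‖ ∈ Ioo (0 : ℝ) 1 := ⟨norm_pos_iff.2 hz0, hz⟩
    have hlt := tsum_mul_rpow_lt_mul (fun n => add_nonneg (hc n) (hd n)) he hbs hle hC hr.1 hr.2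
    rw [hsplit _ hr] at hlt
    calc ‖rpowSeries d e z‖ ≤ ∑' n, d n * ‖z‖ ^ e n := norm_rpowSeries_le hd (hS _ hr).2
      _ < C * ‖z‖ - ∑' n, c n * ‖z‖ ^ e n := by linarith
      _ ≤ ‖(C : ℂ) * z‖ - ‖rpowSeries c e z‖ := by
        rw [norm_mul, Complex.norm_real, Real.norm_of_nonneg hC.le]
        linarith [norm_rpowSeries_le hc (hS _ hr).1]
      _ ≤ ‖(C : ℂ) * z - rpowSeries c e z‖ := norm_sub_norm_le _ _

namespace ClassE

noncomputable def exponent (μ : ℝ) (n : ℕ) : ℝ := μ * (n + 2 : ℕ)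

noncomputable def coeff (μ : ℝ) (j : ℕ) (c a : ℕ → ℝ) (n : ℕ) : ℝ :=
  (μ * (n + 2 : ℕ)) ^ j * c (n + 2) * a (n + 2)

theorem one_lt_exponent {μ : ℝ} (hμ : 1 ≤ μ) (n : ℕ) : 1 < exponent μ n := by
  have : (2 : ℝ) ≤ (n + 2 : ℕ) := by push_cast; linarith [n.cast_nonneg (α := ℝ)]
  unfold exponent; nlinarith

theorem coeff_nonneg {μ : ℝ} {j : ℕ} {c a : ℕ → ℝ} (hμ : 1 ≤ μ) (hc : ∀ n, 2 ≤ n → 0 ≤ c n)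
    (ha : ∀ n, 2 ≤ n → 0 ≤ a n) (n : ℕ) : 0 ≤ coeff μ j c a n := by
  have hx : (0 : ℝ) ≤ μ * (n + 2 : ℕ) := (zero_lt_one.trans (one_lt_exponent hμ n)).le
  exact mul_nonneg (mul_nonneg (pow_nonneg hx j) (hc _ (by omega))) (ha _ (by omega))

theorem coeff_le_coeff {μ : ℝ} {m k : ℕ} {lam ϑ a : ℕ → ℝ} (hμ : 1 ≤ μ) (hkm : m ≤ k)
    (hlam : ∀ n, 2 ≤ n → 0 ≤ lam n) (hϑ : ∀ n, 2 ≤ n → lam n ≤ ϑ n)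
    (ha : ∀ n, 2 ≤ n → 0 ≤ a n) (n : ℕ) : coeff μ m lam a n ≤ coeff μ k ϑ a n := by
  have hx : (1 : ℝ) ≤ μ * (n + 2 : ℕ) := (one_lt_exponent hμ n).le
  exact mul_le_mul_of_nonneg_right (mul_le_mul (pow_le_pow_right₀ hx hkm) (hϑ _ (by omega))
    (hlam _ (by omega)) (pow_nonneg (zero_le_one.trans hx) k)) (ha _ (by omega))

theorem forall_summable_norm_iff {a p q e : ℕ → ℝ} (B : ℝ) {C : ℝ} (hC : C ≠ 0)
    (ha : ∀ n, 0 ≤ a n) (hp : ∀ n, 0 ≤ p n) (hq : ∀ n, 0 ≤ q n) :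
    (∀ z : ℂ, ‖z‖ < 1 →
        (Summable fun n => ‖(a n : ℂ) * z ^ (e n : ℂ)‖) ∧
        (Summable fun n => ‖(q n : ℂ) * z ^ (e n : ℂ)‖) ∧
        Summable fun n => ‖(p n : ℂ) * z ^ (e n : ℂ)‖) ↔
      ∀ r : ℝ, 0 ≤ r → r < 1 →
        (Summable fun n => a n * r ^ e n) ∧
        (Summable fun n => (C * p n - B * (q n - p n)) * r ^ e n) ∧
        Summable fun n => (q n - p n) * r ^ e n := by
  simp only [summable_norm_mul_cpow_iff ha, summable_norm_mul_cpow_iff hp,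
    summable_norm_mul_cpow_iff hq, ← summable_mul_rpow_and_summable_iff B hC]
  constructor
  · intro h r hr0 hr1
    have hr := h r (by rwa [Complex.norm_real, Real.norm_of_nonneg hr0])
    rw [Complex.norm_real, Real.norm_of_nonneg hr0] at hr
    exact ⟨hr.1, hr.2.symm⟩
  · intro h z hz
    obtain ⟨ha, hp, hq⟩ := h _ (norm_nonneg z) hz
    exact ⟨ha, hq, hp⟩

theorem memE_iff_rpowSeries {μ A B γ : ℝ} {k m : ℕ} {a ϑ lam : ℕ → ℝ} :
    memE μ A B γ k m ϑ lam a ↔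
      (∀ z : ℂ, ‖z‖ < 1 →
        (Summable fun n => ‖(a (n + 2) : ℂ) * z ^ (exponent μ n : ℂ)‖) ∧
        (Summable fun n => ‖(coeff μ k ϑ a n : ℂ) * z ^ (exponent μ n : ℂ)‖) ∧
        Summable fun n => ‖(coeff μ m lam a n : ℂ) * z ^ (exponent μ n : ℂ)‖) ∧
      ∀ z : ℂ, ‖z‖ < 1 → z ≠ 0 →
        ‖(z - rpowSeries (coeff μ k ϑ a) (exponent μ) z) -
            (z - rpowSeries (coeff μ m lam a) (exponent μ) z)‖ <
          ‖(((A - B) * (1 - γ) : ℝ) : ℂ) * (z - rpowSeries (coeff μ m lam a) (exponent μ) z) -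
            (B : ℂ) * ((z - rpowSeries (coeff μ k ϑ a) (exponent μ) z) -
              (z - rpowSeries (coeff μ m lam a) (exponent μ) z))‖ :=
  Iff.rfl

theorem xi_mul_eq {μ A B γ : ℝ} {k m : ℕ} {a ϑ lam : ℕ → ℝ} (n : ℕ) :
    Xi μ A B γ k m ϑ lam (n + 2) * a (n + 2) =
      ((A - B) * (1 - γ) * coeff μ m lam a n - B * (coeff μ k ϑ a n - coeff μ m lam a n)) +
        (coeff μ k ϑ a n - coeff μ m lam a n) := by
  simp only [Xi, coeff]; ring

theorem xi_mul_nonneg {μ A B γ : ℝ} {k m : ℕ} {a ϑ lam : ℕ → ℝ} (hμ : 1 ≤ μ) (hkm : m ≤ k)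
    (hBA : B < A) (hB0 : B < 0) (hγ1 : γ < 1) (ha : ∀ n, 2 ≤ n → 0 ≤ a n)
    (hlam : ∀ n, 2 ≤ n → 0 ≤ lam n) (hϑ : ∀ n, 2 ≤ n → lam n ≤ ϑ n) (n : ℕ) :
    0 ≤ Xi μ A B γ k m ϑ lam (n + 2) * a (n + 2) := by
  have hC : 0 < (A - B) * (1 - γ) := mul_pos (sub_pos.2 hBA) (sub_pos.2 hγ1)
  have hp := coeff_nonneg (j := m) hμ hlam ha n
  have hd := sub_nonneg.2 (coeff_le_coeff hμ hkm hlam hϑ ha n)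
  rw [xi_mul_eq]
  nlinarith

theorem memE_iff {μ A B γ : ℝ} {k m : ℕ} {a ϑ lam : ℕ → ℝ} (hμ : 1 ≤ μ) (hkm : m ≤ k)
    (hBA : B < A) (hB0 : B < 0) (hγ1 : γ < 1) (ha : ∀ n, 2 ≤ n → 0 ≤ a n)
    (hlam : ∀ n, 2 ≤ n → 0 ≤ lam n) (hϑ : ∀ n, 2 ≤ n → lam n ≤ ϑ n) :
    memE μ A B γ k m ϑ lam a ↔
      (∀ r : ℝ, 0 ≤ r → r < 1 →
        Summable fun n : ℕ => a (n + 2) * r ^ (μ * (n + 2 : ℕ) : ℝ)) ∧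
      Summable (fun n => Xi μ A B γ k m ϑ lam (n + 2) * a (n + 2)) ∧
      ∑' n, Xi μ A B γ k m ϑ lam (n + 2) * a (n + 2) ≤ (A - B) * (1 - γ) := by
  rw [memE_iff_rpowSeries]
  set C := (A - B) * (1 - γ)
  set e := exponent μ
  set p := coeff μ m lam a
  set q := coeff μ k ϑ a
  have hC : 0 < C := mul_pos (by linarith) (by linarith)
  have he := one_lt_exponent hμ
  have he0 : ∀ n, 0 ≤ e n := fun n => zero_le_one.trans (he n).le
  have ha' : ∀ n, 0 ≤ a (n + 2) := fun n => ha _ (by omega)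
  have hp := coeff_nonneg (j := m) hμ hlam ha
  have hpq := coeff_le_coeff hμ hkm hlam hϑ ha
  have hd : ∀ n, 0 ≤ q n - p n := fun n => sub_nonneg.2 (hpq n)
  have hc : ∀ n, 0 ≤ C * p n - B * (q n - p n) := fun n => by nlinarith [hp n, hd n]
  have hXi : ∀ n, Xi μ A B γ k m ϑ lam (n + 2) * a (n + 2) =
      (C * p n - B * (q n - p n)) + (q n - p n) := xi_mul_eq
  simp only [hXi]
  have hcrit := fun hS => forall_norm_rpowSeries_lt_iff hc hd he hC hS
  have hsummable := forall_summable_norm_iff (e := e) (a := fun n => a (n + 2)) B hC.ne' ha' hp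
    fun n => (hp n).trans (hpq n)
  constructor
  · rintro ⟨hsum, hsub⟩
    have hreal := hsummable.1 hsum
    refine ⟨fun r hr0 hr1 => (hreal r hr0 hr1).1,
      (hcrit fun r hr => (hreal r hr.1.le hr.2).2).1 fun z hz hz0 => ?_⟩
    exact (norm_sub_rpowSeries_lt_iff C B (hsum z hz).2.2.of_norm (hsum z hz).2.1.of_norm).1
      (hsub z hz hz0)
  · rintro ⟨hsa, hbs, hle⟩
    have hcd_real : ∀ r : ℝ, 0 ≤ r → r < 1 →
        (Summable fun n => (C * p n - B * (q n - p n)) * r ^ e n) ∧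
          Summable fun n => (q n - p n) * r ^ e n := fun r hr0 hr1 =>
      ⟨summable_mul_rpow_of_le hc (fun n => le_add_of_nonneg_right (hd n)) he0 hr0 hr1.le hbs,
        summable_mul_rpow_of_le hd (fun n => le_add_of_nonneg_left (hc n)) he0 hr0 hr1.le hbs⟩
    have hsum := hsummable.2 fun r hr0 hr1 => ⟨hsa r hr0 hr1, hcd_real r hr0 hr1⟩
    refine ⟨hsum, fun z hz hz0 => (norm_sub_rpowSeries_lt_iff C B (hsum z hz).2.2.of_norm
      (hsum z hz).2.1.of_norm).2 ?_⟩
    exact (hcrit fun r hr => hcd_real r hr.1.le hr.2).2 ⟨hbs, hle⟩ z hz hz0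

end ClassE

theorem summable_tsum_le_iff_exists_hasSum_one {f : ℕ → ℝ} {C : ℝ} (hC : 0 < C)
    (hf : ∀ n, 0 ≤ f (n + 2)) :
    (Summable (fun n => f (n + 2)) ∧ ∑' n, f (n + 2) ≤ C) ↔
      ∃ η : ℕ → ℝ, (∀ n, 1 ≤ n → 0 ≤ η n) ∧ HasSum (fun n => η (n + 1)) 1 ∧
        ∀ n, 2 ≤ n → f n = η n * C := by
  constructor
  · rintro ⟨hs, hle⟩
    refine ⟨fun n => if n = 1 then 1 - (∑' n, f (n + 2)) / C else f n / C, fun n hn => ?_, ?_,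
      fun n hn => ?_⟩
    · dsimp only
      split_ifs with h1
      · linarith [(div_le_one hC).2 hle]
      · obtain ⟨j, rfl⟩ : ∃ j, n = j + 2 := ⟨n - 2, by omega⟩
        exact div_nonneg (hf j) hC.le
    · refine (hasSum_nat_add_iff' 1).1 ?_
      simpa using hs.hasSum.div_const C
    · dsimp only
      rw [if_neg (by omega), div_mul_cancel₀ _ hC.ne']
  · rintro ⟨η, hη0, hη, hfη⟩
    have htail : HasSum (fun n => f (n + 2)) ((1 - η 1) * C) := by
      have := ((hasSum_nat_add_iff' 1).2 hη).mul_right C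
      simpa [hfη _ (Nat.le_add_left 2 _)] using this
    exact ⟨htail.summable, htail.tsum_eq.le.trans (by nlinarith [hη0 1 le_rfl])⟩

theorem stmt9_general (μ A B γ : ℝ) (k m : ℕ) (a ϑ lam : ℕ → ℝ)
    (hμ : 1 ≤ μ) (hkm : m ≤ k)
    (hBA : B < A) (hB0 : B < 0)
    (hγ1 : γ < 1)
    (ha : ∀ n, 2 ≤ n → 0 ≤ a n)
    (hlam : ∀ n, 2 ≤ n → 0 ≤ lam n) (hϑ : ∀ n, 2 ≤ n → lam n ≤ ϑ n) :
    memE μ A B γ k m ϑ lam a ↔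
      ((∀ r : ℝ, 0 ≤ r → r < 1 →
        Summable fun n : ℕ => a (n + 2) * r ^ (μ * (n + 2 : ℕ) : ℝ)) ∧
      ∃ η : ℕ → ℝ, (∀ n, 1 ≤ n → 0 ≤ η n) ∧
        HasSum (fun n : ℕ => η (n + 1)) 1 ∧
        ∀ n, 2 ≤ n →
          Xi μ A B γ k m ϑ lam n * a n = η n * ((A - B) * (1 - γ))) := by
  have hC : 0 < (A - B) * (1 - γ) := mul_pos (sub_pos.2 hBA) (sub_pos.2 hγ1)
  rw [ClassE.memE_iff hμ hkm hBA hB0 hγ1 ha hlam hϑ,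
    summable_tsum_le_iff_exists_hasSum_one (f := fun n => Xi μ A B γ k m ϑ lam n * a n) hC
      (ClassE.xi_mul_nonneg hμ hkm hBA hB0 hγ1 ha hlam hϑ)]

/-- extreme points, Theorem 2.5 of the paper:
`F_μ ∈ Ẽ_{k,m}(Φ_μ,Ψ_μ,A,B,μ,γ)` if and only if `Σ_{n≥2} aₙ r^{μn}` converges for
every `0 ≤ r < 1` and there is a sequence `(ηₙ)_{n≥1}` of nonnegative reals with
`Σ_{n≥1} ηₙ = 1` and `Ξ(n)aₙ = ηₙ (A−B)(1−γ)` for all `n ≥ 2`; equivalently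
`F_μ = Σ_{n≥1} ηₙ F_{μn}` with `F_{μ1}(z) = z` and
`F_{μn}(z) = z − ((A−B)(1−γ)/Ξ(n)) z^{μn}` for `n ≥ 2`. -/
theorem stmt9 (μ A B γ : ℝ) (k m : ℕ) (a ϑ lam : ℕ → ℝ)
    (hμ : 1 ≤ μ) (hkm : m ≤ k)
    (hB : -1 ≤ B) (hBA : B < A) (hA : A ≤ 1) (hB0 : B < 0)
    (hγ0 : 0 ≤ γ) (hγ1 : γ < 1)
    (ha : ∀ n, 2 ≤ n → 0 ≤ a n)
    (hlam : ∀ n, 2 ≤ n → 0 ≤ lam n) (hϑ : ∀ n, 2 ≤ n → lam n ≤ ϑ n) :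
    memE μ A B γ k m ϑ lam a ↔
      ((∀ r : ℝ, 0 ≤ r → r < 1 →
        Summable fun n : ℕ => a (n + 2) * r ^ (μ * (n + 2 : ℕ) : ℝ)) ∧
      ∃ η : ℕ → ℝ, (∀ n, 1 ≤ n → 0 ≤ η n) ∧
        HasSum (fun n : ℕ => η (n + 1)) 1 ∧
        ∀ n, 2 ≤ n →
          Xi μ A B γ k m ϑ lam n * a n = η n * ((A - B) * (1 - γ))) :=
  stmt9_general μ A B γ k m a ϑ lam hμ hkm hBA hB0 hγ1 ha hlam hϑ
end
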